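/- arXiv:2302.04339 — 2 statements merged into one kernel-verified Lean document; each statement's English description precedes it below -/
import Mathlib

section
/- Let p, q be complex univariate polynomials and suppose there exists z₀ ∈ ℂ with q(z₀) = 0 and p(z₀) ≠ 0 (or vice versa). Then the bivariate polynomials P(z,w) = p(z)·q*(w) − 1 and Q(z,w) = p*(w)·q(z) − 1 are coprime in ℂ[z,w]. -/
open Polynomial

/-!
Take `z₀` with `q(z₀) = 0 ≠ p(z₀)` and put `w₀ = conj z₀`, so that `q*(w₀) = 0 ≠ p*(w₀)`.
Specialising `w = w₀` turns `P` into `-1` and `Q` into `p*(w₀)·q(z) - 1`, which has the full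
`z`-degree of `Q`; hence a common divisor of `P` and `Q` is constant in `z`, i.e. lies in `ℂ[w]`.
Specialising `z = z₀` turns `Q` into `-1`, so that divisor is a unit.
-/

namespace Polynomial

variable {R : Type*} [CommRing R]

theorem natDegree_eq_zero_of_dvd_of_natDegree_le_map [IsDomain R] {S : Type*} [Semiring S]
    (φ : R →+* S) {d f : R[X]} (hf : f ≠ 0) (hdf : d ∣ f) (hφd : (d.map φ).natDegree = 0)
    (hφf : f.natDegree ≤ (f.map φ).natDegree) : d.natDegree = 0 := by
  obtain ⟨e, rfl⟩ := hdf
  have hd : d ≠ 0 := left_ne_zero_of_mul hf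
  have he : e ≠ 0 := right_ne_zero_of_mul hf
  have : (d * e).natDegree ≤ e.natDegree :=
    calc (d * e).natDegree ≤ ((d * e).map φ).natDegree := hφf
      _ ≤ (d.map φ).natDegree + (e.map φ).natDegree := by
        rw [Polynomial.map_mul]; exact natDegree_mul_le
      _ ≤ e.natDegree := by rw [hφd, zero_add]; exact natDegree_map_le
  rw [natDegree_mul hd he] at this
  omega

theorem map_map_C_evalRingHom (w₀ : R) (q : R[X]) : (q.map C).map (evalRingHom w₀) = q := by
  rw [Polynomial.map_map]
  convert Polynomial.map_id
  ext; simp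

theorem isRelPrime_map_C_mul_C_sub_one [IsDomain R] (p q a b : R[X]) {z₀ w₀ : R}
    (hq : q.IsRoot z₀) (ha : a.IsRoot w₀) (hb : b.eval w₀ ≠ 0) :
    IsRelPrime (p.map C * C a - 1) (q.map C * C b - 1) := by
  intro d hdP hdQ
  set Q := q.map C * C b - 1
  have hP_w₀ : (p.map C * C a - 1).map (evalRingHom w₀) = -1 := by
    simp [map_map_C_evalRingHom, ha.eq_zero]
  have hQ_w₀ : Q.map (evalRingHom w₀) = q * C (b.eval w₀) - 1 := by
    simp [Q, map_map_C_evalRingHom]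
  have hQ_z₀ : Q.eval (C z₀) = -1 := by
    simp [Q, hq.eq_zero]
  have hd_w₀ : (d.map (evalRingHom w₀)).natDegree = 0 :=
    natDegree_eq_zero_of_isUnit <|
      isUnit_of_dvd_unit (map_dvd _ hdP) (hP_w₀ ▸ isUnit_one.neg)
  have hQ : Q ≠ 0 := fun h0 => by simp [h0] at hQ_z₀
  have hdegQ : Q.natDegree ≤ (Q.map (evalRingHom w₀)).natDegree := by
    rw [hQ_w₀, ← C_1, natDegree_sub_C, natDegree_mul_C hb]
    simp only [Q, ← C_1, natDegree_sub_C]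
    exact natDegree_mul_C_le _ _ |>.trans natDegree_map_le
  obtain ⟨e, rfl⟩ := natDegree_eq_zero.mp <|
    natDegree_eq_zero_of_dvd_of_natDegree_le_map _ hQ hdQ hd_w₀ hdegQ
  have he : IsUnit e := by
    simpa using isUnit_of_dvd_unit (_root_.map_dvd (evalRingHom (C z₀)) hdQ)
      (by simp [hQ_z₀])
  exact he.map C

end Polynomial

/-- If the zero sets of `p` and `q` differ (there is a point where one vanishes but not
the other), then `P(z,w) = p(z)·q*(w) − 1` and `Q(z,w) = p*(w)·q(z) − 1` are coprime
in `ℂ[z,w]` (represented as `(ℂ[w])[z]`). -/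
theorem stmt_3 (p q : Polynomial ℂ)
    (h : (∃ z₀ : ℂ, q.eval z₀ = 0 ∧ p.eval z₀ ≠ 0) ∨
         (∃ z₀ : ℂ, p.eval z₀ = 0 ∧ q.eval z₀ ≠ 0)) :
    IsRelPrime
      (p.map (Polynomial.C : ℂ →+* Polynomial ℂ) *
        Polynomial.C (q.map (starRingEnd ℂ)) - 1)
      (q.map (Polynomial.C : ℂ →+* Polynomial ℂ) *
        Polynomial.C (p.map (starRingEnd ℂ)) - 1) := by
  rcases h with ⟨z₀, hq, hp⟩ | ⟨z₀, hp, hq⟩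
  · exact isRelPrime_map_C_mul_C_sub_one p q _ _ (w₀ := starRingEnd ℂ z₀) hq
      (by simp [IsRoot, hq]) (by simpa using hp)
  · exact (isRelPrime_map_C_mul_C_sub_one q p _ _ (w₀ := starRingEnd ℂ z₀) hp
      (by simp [IsRoot, hp]) (by simpa using hq)).symm
end

section
/- Let P(z, z̄) = Σ_{k=0}^m p_k(z) z̄^k be a polyanalytic polynomial with deg p_k ≤ n for all k and p_m ≠ 0, and let Q(z,w) = conj-reflected polynomial satisfying Q(z, z̄) = conj(P(z, z̄)) for all z. If P(z,w) and Q(z,w) are coprime as bivariate polynomials, then the number of z ∈ ℂ with P(z, conj z) = 0 is at most n² + m². -/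
open Polynomial Complex

/-- Evaluation of a polyanalytic-type bivariate polynomial
`P = Σ_k p_k(z) w^k ∈ (ℂ[z])[w]` at the point `(z₀, w₀)`. -/
noncomputable def biEvalZW (P : Polynomial (Polynomial ℂ)) (z₀ w₀ : ℂ) : ℂ :=
  (P.map (Polynomial.evalRingHom z₀)).eval w₀

/-!
The hypothesis on `Q` determines it: it must be the polynomial obtained from `P` by swapping
the variables and conjugating the coefficients, so `Q` has `w`-degree at most `n` and
coefficients of degree at most `m`. The resultant of `P` and `Q` with respect to `w` is then a
polynomial in `z`, nonzero because `P` and `Q` are coprime, and of degree at most `m·m + n·n`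
because its Sylvester matrix has `m` columns of coefficients of `Q` and `n` columns of
coefficients of `P`. At a zero `z` of `P(z, z̄)`, `w = z̄` is a common root of `P(z, ·)` and
`Q(z, ·)`, so `z` is a root of the resultant.
-/

open ComplexConjugate
open scoped Polynomial.Bivariate

namespace Polynomial

section Resultant

variable {R : Type*} [CommRing R] {f g : R[X]} {m n : ℕ}

theorem resultant_eq_zero_of_eval_eq_zero (hf : f.natDegree ≤ m) (hg : g.natDegree ≤ n)
    (hmn : m ≠ 0 ∨ n ≠ 0) {x : R} (hfx : f.eval x = 0) (hgx : g.eval x = 0) :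
    resultant f g m n = 0 := by
  obtain ⟨p, q, -, -, h⟩ := exists_mul_add_mul_eq_C_resultant f g hf hg hmn
  simpa [hfx, hgx] using (congr_arg (eval x) h).symm

theorem exists_ne_zero_sylvesterMap_eq_zero [IsDomain R] (hf : f.natDegree ≤ m)
    (hg : g.natDegree ≤ n) (h : resultant f g m n = 0) :
    ∃ x ≠ 0, sylvesterMap f g hf hg x = 0 := by
  classical
  obtain ⟨v, hv, hMv⟩ := Matrix.exists_mulVec_eq_zero_iff.mpr h
  let b := ((degreeLT.basis R m).prod (degreeLT.basis R n)).reindex finSumFinEquiv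
  refine ⟨b.equivFun.symm v, b.equivFun.symm.map_ne_zero_iff.mpr hv, ?_⟩
  have := LinearMap.toMatrix_mulVec_repr b (degreeLT.basis R (m + n)) (sylvesterMap f g hf hg)
    (b.equivFun.symm v)
  rw [toMatrix_sylvesterMap', ← b.equivFun_apply, LinearEquiv.apply_symm_apply, hMv] at this
  exact (degreeLT.basis R (m + n)).repr.map_eq_zero_iff.mp (DFunLike.coe_injective this.symm)

theorem resultant_ne_zero_of_isRelPrime [IsDomain R] [DecompositionMonoid R[X]]
    (hfg : IsRelPrime f g) (hf : f ≠ 0) (hg : g.natDegree ≤ n) :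
    resultant f g f.natDegree n ≠ 0 := by
  intro h
  obtain ⟨⟨p, q⟩, hpq, h0⟩ := exists_ne_zero_sylvesterMap_eq_zero le_rfl hg h
  have hfq : f * q + g * p = 0 := congr_arg Subtype.val h0
  have hp : (p : R[X]) = 0 := by
    refine eq_zero_of_dvd_of_degree_lt (hfg.dvd_of_dvd_mul_left ⟨-q, ?_⟩) ?_
    · linear_combination hfq
    · rw [degree_eq_natDegree hf]
      exact mem_degreeLT.mp p.2
  have hq : (q : R[X]) = 0 := by
    simpa [hp, hf] using hfq
  exact hpq (by ext1 <;> ext1 <;> assumption)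

end Resultant

theorem natDegree_det_le_sum_of_col_le {ι R : Type*} [Fintype ι] [DecidableEq ι] [CommRing R]
    (M : Matrix ι ι R[X]) (d : ι → ℕ) (hM : ∀ i j, (M i j).natDegree ≤ d j) :
    M.det.natDegree ≤ ∑ j, d j := by
  rw [Matrix.det_apply]
  refine natDegree_sum_le_of_forall_le _ _ fun σ _ => ?_
  calc (Equiv.Perm.sign σ • ∏ i, M (σ i) i).natDegree
      ≤ (∏ i, M (σ i) i).natDegree := by
        rw [Units.smul_def]
        exact natDegree_smul_le _ _
    _ ≤ ∑ i, (M (σ i) i).natDegree := natDegree_prod_le _ _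
    _ ≤ ∑ j, d j := Finset.sum_le_sum fun i _ => hM _ _

theorem natDegree_resultant_le {R : Type*} [CommRing R] {f g : R[X][Y]} (m n : ℕ) {a b : ℕ}
    (hf : ∀ k, (f.coeff k).natDegree ≤ a) (hg : ∀ k, (g.coeff k).natDegree ≤ b) :
    (resultant f g m n).natDegree ≤ m * b + n * a := by
  have := natDegree_det_le_sum_of_col_le (sylvester f g m n) (Fin.addCases (fun _ => b) fun _ => a)
    fun i j => by
      induction j using Fin.addCases <;>
        simp only [sylvester, Matrix.of_apply, Fin.addCases_left, Fin.addCases_right] <;>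
        split_ifs <;> simp [hf, hg]
  simpa [resultant, Fin.sum_univ_add] using this

end Polynomial

theorem MvPolynomial.eval_aevalAeval {R σ : Type*} [CommRing R] (x : σ → R)
    (a b : MvPolynomial σ R) (F : R[X][Y]) :
    eval x (aevalAeval a b F) = F.evalEval (eval x a) (eval x b) := by
  have key : (aeval x).comp (aevalAeval a b) = aevalAeval (aeval x a) (aeval x b) := by
    ext <;> simp
  rw [← coe_aevalAeval_eq_evalEval, ← coe_aeval_eq_eval]
  exact DFunLike.congr_fun key F

namespace Polynomial.Bivariate

section Swap

variable {R : Type*} [CommRing R]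

theorem coeff_coeff_swap (p : R[X][Y]) (i j : ℕ) :
    ((swap p).coeff j).coeff i = (p.coeff i).coeff j := by
  induction p using Polynomial.induction_on' with
  | add p q hp hq => simp [hp, hq]
  | monomial n f =>
    rw [swap_monomial, coeff_mul_C, coeff_map, coeff_C_mul_X_pow, coeff_monomial]
    split_ifs <;> simp_all

theorem natDegree_swap_le {p : R[X][Y]} {n : ℕ} (hp : ∀ k, (p.coeff k).natDegree ≤ n) :
    (swap p).natDegree ≤ n := by
  refine natDegree_le_iff_coeff_eq_zero.mpr fun j hj => Polynomial.ext fun i => ?_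
  rw [coeff_coeff_swap, coeff_zero]
  exact coeff_eq_zero_of_natDegree_lt ((hp i).trans_lt (by exact_mod_cast hj))

theorem natDegree_coeff_swap_le (p : R[X][Y]) (j : ℕ) :
    ((swap p).coeff j).natDegree ≤ p.natDegree := by
  refine natDegree_le_iff_coeff_eq_zero.mpr fun i hi => ?_
  rw [coeff_coeff_swap, coeff_eq_zero_of_natDegree_lt (p := p) (by exact_mod_cast hi), coeff_zero]

theorem evalEval_swap (p : R[X][Y]) (x y : R) : (swap p).evalEval x y = p.evalEval y x := by
  rw [← coe_aevalAeval_eq_evalEval, ← coe_aevalAeval_eq_evalEval, aevalAeval_swap]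

end Swap

theorem eq_zero_of_forall_evalEval_eq_zero {R : Type*} [CommRing R] [IsDomain R] [Infinite R]
    {F : R[X][Y]} (h : ∀ x y, F.evalEval x y = 0) : F = 0 := by
  refine (equivMvPolynomial R).injective (MvPolynomial.funext fun x => ?_)
  have := MvPolynomial.eval_aevalAeval x (.X 0) (.X 1) F
  rw [MvPolynomial.eval_X, MvPolynomial.eval_X] at this
  rw [map_zero, map_zero]
  exact this.trans (h (x 0) (x 1))

/-- In the coordinates `z = s + i t`, `w = s - i t` the hypothesis says that `F` vanishes on the
real plane, which is Zariski dense. -/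
theorem eq_zero_of_evalEval_conj_eq_zero {F : ℂ[X][Y]}
    (h : ∀ z, F.evalEval z (conj z) = 0) : F = 0 := by
  let G : MvPolynomial (Fin 2) ℂ := aevalAeval (.X 0 + .C I * .X 1) (.X 0 - .C I * .X 1) F
  have hG : G = 0 := by
    refine MvPolynomial.funext_set (fun _ => Set.range ofReal)
      (fun _ => Set.infinite_range_of_injective ofReal_injective) fun x hx => ?_
    obtain ⟨s, hs⟩ := hx 0 trivial
    obtain ⟨t, ht⟩ := hx 1 trivial
    have hconj : conj (x 0 + I * x 1) = x 0 - I * x 1 := by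
      simp only [← hs, ← ht, map_add, map_mul, conj_ofReal, conj_I]
      ring
    simp only [G, MvPolynomial.eval_aevalAeval, map_add, map_sub, map_mul, MvPolynomial.eval_X,
      MvPolynomial.eval_C, map_zero]
    rw [← hconj]
    exact h _
  refine eq_zero_of_forall_evalEval_eq_zero fun z w => ?_
  have := congr_arg (MvPolynomial.eval ![(z + w) / 2, (z - w) / (2 * I)]) hG
  simp only [G, MvPolynomial.eval_aevalAeval, map_add, map_sub, map_mul, MvPolynomial.eval_X,
    MvPolynomial.eval_C, map_zero] at this
  convert this using 2 <;> simp <;> field_simp <;> ring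

noncomputable def conjSwap (P : ℂ[X][Y]) : ℂ[X][Y] :=
  swap (P.map (mapRingHom (starRingEnd ℂ)))

theorem evalEval_conjSwap (P : ℂ[X][Y]) (z w : ℂ) :
    (conjSwap P).evalEval z w = conj (P.evalEval (conj w) (conj z)) := by
  rw [conjSwap, evalEval_swap, ← map_mapRingHom_evalEval, conj_conj, conj_conj]

theorem eq_conjSwap {P Q : ℂ[X][Y]}
    (hQ : ∀ z, Q.evalEval z (conj z) = conj (P.evalEval z (conj z))) : Q = conjSwap P := by
  refine sub_eq_zero.mp (eq_zero_of_evalEval_conj_eq_zero fun z => ?_)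
  rw [evalEval_sub, hQ, evalEval_conjSwap, conj_conj, sub_self]

theorem natDegree_conjSwap_le {P : ℂ[X][Y]} {n : ℕ} (hP : ∀ k, (P.coeff k).natDegree ≤ n) :
    (conjSwap P).natDegree ≤ n :=
  natDegree_swap_le fun k => by
    rw [coeff_map, coe_mapRingHom]
    exact natDegree_map_le.trans (hP k)

theorem natDegree_coeff_conjSwap_le (P : ℂ[X][Y]) (k : ℕ) :
    ((conjSwap P).coeff k).natDegree ≤ P.natDegree :=
  (natDegree_coeff_swap_le _ k).trans natDegree_map_le

theorem eval_resultant_conjSwap_eq_zero {P : ℂ[X][Y]} {m n : ℕ} (hm : P.natDegree ≤ m)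
    (hn : ∀ k, (P.coeff k).natDegree ≤ n) (hmn : m ≠ 0 ∨ n ≠ 0) {z : ℂ}
    (hz : P.evalEval z (conj z) = 0) : (resultant P (conjSwap P) m n).eval z = 0 := by
  rw [← coe_evalRingHom, ← resultant_map_map]
  refine resultant_eq_zero_of_eval_eq_zero (natDegree_map_le.trans hm)
    (natDegree_map_le.trans (natDegree_conjSwap_le hn)) hmn (x := conj z) ?_ ?_
  · rwa [map_evalRingHom_eval]
  · rw [map_evalRingHom_eval, evalEval_conjSwap, conj_conj, hz, map_zero]

end Polynomial.Bivariate

open Polynomial.Bivariate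

/-- Let `P(z,z̄) = Σ_{k=0}^m p_k(z) z̄^k` be a polyanalytic polynomial with
`deg p_k ≤ n` for all `k` and `p_m ≠ 0`, and let `Q` be a bivariate polynomial with
`Q(z, z̄) = conj (P(z, z̄))` for all `z`.  If `P` and `Q` are coprime as bivariate
polynomials, then `P(z, z̄)` has at most `n² + m²` zeros. -/
theorem stmt_7 (P Q : Polynomial (Polynomial ℂ)) (n m : ℕ)
    (hn : ∀ k : ℕ, (P.coeff k).natDegree ≤ n)
    (hm : P.natDegree = m) (hpm : P.coeff m ≠ 0)
    (hQ : ∀ z : ℂ, biEvalZW Q z (starRingEnd ℂ z) =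
      starRingEnd ℂ (biEvalZW P z (starRingEnd ℂ z)))
    (hcop : IsRelPrime P Q) :
    ({z : ℂ | biEvalZW P z (starRingEnd ℂ z) = 0}).ncard ≤ n ^ 2 + m ^ 2 := by
  simp only [biEvalZW, map_evalRingHom_eval] at hQ ⊢
  obtain rfl : Q = conjSwap P := eq_conjSwap hQ
  have hP0 : P ≠ 0 := fun h => hpm (by simp [h])
  have hR0 : resultant P (conjSwap P) m n ≠ 0 :=
    hm ▸ resultant_ne_zero_of_isRelPrime hcop hP0 (natDegree_conjSwap_le hn)
  set R := resultant P (conjSwap P) m n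
  have hsub : {z | P.evalEval z (conj z) = 0} ⊆ R.rootSet ℂ := by
    intro z (hz : P.evalEval z (conj z) = 0)
    have hmn : m ≠ 0 ∨ n ≠ 0 := by
      by_contra! h0
      obtain ⟨rfl, rfl⟩ := h0
      rw [eq_C_of_natDegree_eq_zero hm, evalEval_C, eq_C_of_natDegree_le_zero (hn 0),
        eval_C] at hz
      exact hpm (by rw [eq_C_of_natDegree_le_zero (hn 0), hz, C_0])
    rw [mem_rootSet, coe_aeval_eq_eval]
    exact ⟨hR0, eval_resultant_conjSwap_eq_zero hm.le hn hmn hz⟩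
  calc {z | P.evalEval z (conj z) = 0}.ncard
      ≤ (R.rootSet ℂ).ncard := Set.ncard_le_ncard hsub (rootSet_finite R ℂ)
    _ ≤ R.natDegree := ncard_rootSet_le R ℂ
    _ ≤ m * m + n * n :=
        natDegree_resultant_le m n hn (natDegree_coeff_conjSwap_le P · |>.trans hm.le)
    _ = n ^ 2 + m ^ 2 := by ring
end
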